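/- Let a_0(n), a_1(n) be real sequences converging to l and m respectively, and let x ≥ 0. Then lim_{n→∞} n·V_{n,1}((t−x); x) = (1+2x)(3l − 2m), where the operator is applied to the function t ↦ t − x. -/

import Mathlib

open MeasureTheory Filter Topology

/-- Baskakov basis function `p_{n,k}(x) = C(n+k-1, k) x^k / (1+x)^{n+k}`. -/
noncomputable def bask (n k : ℕ) (x : ℝ) : ℝ :=
  (Nat.choose (n + k - 1) k : ℝ) * x ^ k / (1 + x) ^ (n + k)

/-- Modified basis `p^1_{n,k}(x) = a(x,n) p_{n+1,k}(x) + b(x,n) p_{n+1,k-1}(x)`,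
with `p_{n+1,-1} = 0`. -/
noncomputable def p1 (a0 a1 : ℕ → ℝ) (n k : ℕ) (x : ℝ) : ℝ :=
  (a0 n + a1 n * x) * bask (n + 1) k x
    + (a0 n - a1 n * (1 + x)) * (if k = 0 then 0 else bask (n + 1) (k - 1) x)

/-- First-order modified Baskakov–Durrmeyer operator. -/
noncomputable def V1 (a0 a1 : ℕ → ℝ) (n : ℕ) (f : ℝ → ℝ) (x : ℝ) : ℝ :=
  ((n : ℝ) - 1) * ∑' k : ℕ, p1 a0 a1 n k x * ∫ t in Set.Ioi (0 : ℝ), bask n k t * f t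

/-!
The identity `(k+1) p_{n,k+1}(t) = n t p_{n+1,k}(t)` drives everything. Integration by parts
shows that `∫₀^∞ p_{n,k}` does not depend on `k`, so it is `1/(n-1)`; with the identity this
gives `∫₀^∞ p_{n,k}(t) (t - x) dt = (k+1)/((n-1)(n-2)) - x/(n-1)`, affine in `k`. The identity
also gives the first moment `∑ₖ k p_{n+1,k}(x) = (n+1) x`, so the series defining
`V_{n,1}(t - x; x)` sums to `(1+2x)(3 a₀(n) - 2 a₁(n))/(n-2)` for `n ≥ 3`.
-/

open Set

lemma integrableOn_pow_div_one_add_pow {k M : ℕ} (h : k + 2 ≤ M) :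
    IntegrableOn (fun t : ℝ => t ^ k / (1 + t) ^ M) (Ioi 0) := by
  refine integrable_inv_one_add_sq.integrableOn.mono' ?_ ?_
  · exact (ContinuousOn.div (by fun_prop) (by fun_prop)
      fun t ht => by simp only [mem_Ioi] at ht; positivity).aestronglyMeasurable measurableSet_Ioi
  · rw [ae_restrict_iff' measurableSet_Ioi]
    refine .of_forall fun t (ht : 0 < t) => ?_
    rw [Real.norm_of_nonneg (by positivity), div_le_iff₀ (by positivity)]
    calc t ^ k ≤ (1 + t) ^ k := by gcongr; linarith
      _ = (1 + t ^ 2)⁻¹ * ((1 + t ^ 2) * (1 + t) ^ k) := by field_simp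
      _ ≤ (1 + t ^ 2)⁻¹ * ((1 + t) ^ 2 * (1 + t) ^ k) := by gcongr; nlinarith
      _ ≤ (1 + t ^ 2)⁻¹ * (1 + t) ^ M := by
        rw [← pow_add]; gcongr <;> [linarith; omega]

lemma tendsto_pow_div_one_add_pow_atTop {k M : ℕ} (h : k + 1 ≤ M) :
    Tendsto (fun t : ℝ => t ^ k / (1 + t) ^ M) atTop (𝓝 0) := by
  have hinv : Tendsto (fun t : ℝ => (1 + t)⁻¹) atTop (𝓝 0) :=
    tendsto_inv_atTop_zero.comp (tendsto_atTop_add_const_left _ _ tendsto_id)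
  refine squeeze_zero' ?_ ?_ hinv
  · filter_upwards [eventually_ge_atTop 0] with t ht
    positivity
  · filter_upwards [eventually_ge_atTop 0] with t ht
    rw [div_le_iff₀ (by positivity), inv_mul_eq_div, le_div_iff₀ (by positivity)]
    calc t ^ k * (1 + t) ≤ (1 + t) ^ k * (1 + t) := by gcongr; linarith
      _ = (1 + t) ^ (k + 1) := (pow_succ _ _).symm
      _ ≤ (1 + t) ^ M := pow_le_pow_right₀ (by linarith) h

lemma hasDerivAt_pow_succ_div_one_add_pow (k M : ℕ) {t : ℝ} (ht : 1 + t ≠ 0) :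
    HasDerivAt (fun t : ℝ => t ^ (k + 1) / (1 + t) ^ M)
      ((k + 1) * (t ^ k / (1 + t) ^ M) - M * (t ^ (k + 1) / (1 + t) ^ (M + 1))) t := by
  refine ((hasDerivAt_pow (k + 1) t).fun_div (((hasDerivAt_id' t).const_add 1).fun_pow M)
    (pow_ne_zero M ht)).congr_deriv ?_
  rcases M with _ | M
  · simp
  · simp only [Nat.cast_add, Nat.cast_one, add_tsub_cancel_right]
    field_simp
    ring

lemma integral_pow_succ_div_one_add_pow {k M : ℕ} (h : k + 2 ≤ M) :
    M * ∫ t in Ioi (0 : ℝ), t ^ (k + 1) / (1 + t) ^ (M + 1)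
      = (k + 1) * ∫ t in Ioi (0 : ℝ), t ^ k / (1 + t) ^ M := by
  have hint₀ := integrableOn_pow_div_one_add_pow h
  have hint₁ := integrableOn_pow_div_one_add_pow (k := k + 1) (M := M + 1) (by omega)
  have hftc := integral_Ioi_of_hasDerivAt_of_tendsto'
    (fun t (ht : 0 ≤ t) => hasDerivAt_pow_succ_div_one_add_pow k M (by positivity : 1 + t ≠ 0))
    ((hint₀.const_mul _).sub (hint₁.const_mul _)) (tendsto_pow_div_one_add_pow_atTop (by omega))
  rw [integral_sub (hint₀.const_mul _) (hint₁.const_mul _), integral_const_mul,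
    integral_const_mul] at hftc
  simp only [ne_eq, Nat.add_eq_zero_iff, one_ne_zero, and_false, not_false_eq_true, zero_pow,
    zero_div, sub_zero] at hftc
  linarith

lemma bask_eq_choose_mul (n k : ℕ) (t : ℝ) :
    bask n k t = (n + k - 1).choose k * (t ^ k / (1 + t) ^ (n + k)) :=
  mul_div_assoc _ _ _

lemma integrableOn_bask (n k : ℕ) : IntegrableOn (bask (n + 2) k) (Ioi 0) := by
  simp_rw [funext (bask_eq_choose_mul (n + 2) k)]
  exact (integrableOn_pow_div_one_add_pow (by omega)).const_mul _

lemma integral_bask_zero (n : ℕ) : ∫ t in Ioi (0 : ℝ), bask (n + 2) 0 t = 1 / (n + 1) := by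
  have hderiv : ∀ t ∈ Ici (0 : ℝ),
      HasDerivAt (fun t : ℝ => -(1 / (n + 1)) * ((1 + t) ^ (n + 1))⁻¹) (bask (n + 2) 0 t) t := by
    intro t (ht : 0 ≤ t)
    refine (((((hasDerivAt_id' t).const_add 1).fun_pow (n + 1)).fun_inv
      (by positivity)).const_mul (-(1 / ((n : ℝ) + 1)))).congr_deriv ?_
    simp only [bask, Nat.choose_zero_right, Nat.cast_one, add_zero, pow_zero, Nat.cast_add,
      add_tsub_cancel_right]
    field_simp
    ring
  have hlim : Tendsto (fun t : ℝ => -(1 / ((n : ℝ) + 1)) * ((1 + t) ^ (n + 1))⁻¹) atTop (𝓝 0) := by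
    simpa using ((tendsto_pow_div_one_add_pow_atTop (k := 0) (M := n + 1) (by omega)).const_mul
      (-(1 / ((n : ℝ) + 1))))
  rw [integral_Ioi_of_hasDerivAt_of_tendsto' hderiv (integrableOn_bask n 0) hlim]
  simp

lemma integral_bask_succ (n k : ℕ) :
    ∫ t in Ioi (0 : ℝ), bask (n + 2) (k + 1) t = ∫ t in Ioi (0 : ℝ), bask (n + 2) k t := by
  simp_rw [bask_eq_choose_mul, integral_const_mul]
  have hparts := integral_pow_succ_div_one_add_pow (k := k) (M := n + k + 2) (by omega)
  have hchoose : ((n + k + 2 : ℕ) : ℝ) * (n + k + 1).choose k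
      = (n + k + 2).choose (k + 1) * (k + 1) := by
    exact_mod_cast Nat.add_one_mul_choose_eq (n + k + 1) k
  rw [show n + 2 + (k + 1) - 1 = n + k + 2 by omega, show n + 2 + k - 1 = n + k + 1 by omega,
    show n + 2 + (k + 1) = n + k + 2 + 1 by omega, show n + 2 + k = n + k + 2 by omega]
  have hM : ((n + k + 2 : ℕ) : ℝ) ≠ 0 := by positivity
  apply mul_left_cancel₀ hM
  linear_combination (((n + k + 2).choose (k + 1) : ℕ) : ℝ) * hparts -
    (∫ t in Ioi (0 : ℝ), t ^ k / (1 + t) ^ (n + k + 2)) * hchoose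

lemma integral_bask (n k : ℕ) : ∫ t in Ioi (0 : ℝ), bask (n + 2) k t = 1 / (n + 1) := by
  induction k with
  | zero => exact integral_bask_zero n
  | succ k ih => rw [integral_bask_succ, ih]

lemma succ_mul_bask_succ (n k : ℕ) (t : ℝ) :
    (k + 1) * bask n (k + 1) t = n * t * bask (n + 1) k t := by
  have hchoose : ((n + k).choose (k + 1) : ℝ) * (k + 1) = (n + k).choose k * n := by
    exact_mod_cast (Nat.add_sub_cancel n k ▸ Nat.choose_succ_right_eq (n + k) k)
  simp only [bask, show n + (k + 1) - 1 = n + k by omega, show n + 1 + k = n + (k + 1) by omega,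
    pow_succ]
  linear_combination t ^ k * t / (1 + t) ^ (n + (k + 1)) * hchoose

lemma mul_bask_eq (n k : ℕ) (t : ℝ) :
    t * bask (n + 2) k t = (k + 1) / (n + 1) * bask (n + 1) (k + 1) t := by
  rw [div_mul_eq_mul_div, succ_mul_bask_succ]
  push_cast
  field_simp

lemma integral_bask_mul_sub (n k : ℕ) (x : ℝ) :
    ∫ t in Ioi (0 : ℝ), bask (n + 3) k t * (t - x)
      = (k + 1) / ((n + 1) * (n + 2)) - x / (n + 2) := by
  have hmul (t : ℝ) : bask (n + 3) k t * (t - x)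
      = (k + 1) / (n + 2) * bask (n + 2) (k + 1) t - x * bask (n + 3) k t := by
    rw [mul_sub, mul_comm, mul_bask_eq]
    push_cast
    ring
  simp_rw [hmul]
  rw [integral_sub ((integrableOn_bask n (k + 1)).const_mul _)
    ((integrableOn_bask (n + 1) k).const_mul _), integral_const_mul, integral_const_mul,
    integral_bask, integral_bask]
  push_cast
  field_simp
  ring

section Sums

variable {x : ℝ}

lemma bask_succ_eq_choose_mul_geometric (n k : ℕ) (hx : 1 + x ≠ 0) :
    bask (n + 1) k x = (k + n).choose n * (x / (1 + x)) ^ k / (1 + x) ^ (n + 1) := by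
  rw [bask, show n + 1 + k - 1 = k + n by omega, Nat.choose_symm_add, div_pow,
    show n + 1 + k = k + (n + 1) by omega, pow_add]
  field_simp

lemma hasSum_bask (n : ℕ) (hx : 0 ≤ x) : HasSum (fun k => bask (n + 1) k x) 1 := by
  have hr : ‖x / (1 + x)‖ < 1 := by
    rw [Real.norm_of_nonneg (by positivity), div_lt_one (by positivity)]
    linarith
  convert (hasSum_choose_mul_geometric_of_norm_lt_one n hr).div_const ((1 + x) ^ (n + 1)) using 1
  · rfl
  · exact funext fun k => bask_succ_eq_choose_mul_geometric n k (by positivity)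
  · have : 1 - x / (1 + x) = (1 + x)⁻¹ := by field_simp; ring
    rw [this, inv_pow, one_div, inv_inv, div_self (by positivity)]

lemma hasSum_natCast_mul_bask (n : ℕ) (hx : 0 ≤ x) :
    HasSum (fun k : ℕ => k * bask (n + 1) k x) ((n + 1) * x) := by
  rw [← hasSum_nat_add_iff' 1]
  simpa [succ_mul_bask_succ] using (hasSum_bask (n + 1) hx).mul_left ((n + 1) * x)

lemma hasSum_bask_mul_affine (n : ℕ) (hx : 0 ≤ x) (c d : ℝ) :
    HasSum (fun k : ℕ => bask (n + 1) k x * (c * k + d)) (c * ((n + 1) * x) + d) := by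
  convert ((hasSum_natCast_mul_bask n hx).mul_left c).add ((hasSum_bask n hx).mul_left d)
    using 2 with k <;> first | rfl | ring

lemma hasSum_p1_mul_affine (a0 a1 : ℕ → ℝ) (n : ℕ) (hx : 0 ≤ x) (c d : ℝ) :
    HasSum (fun k : ℕ => p1 a0 a1 n k x * (c * k + d))
      ((a0 n + a1 n * x) * (c * ((n + 1) * x) + d)
        + (a0 n - a1 n * (1 + x)) * (c * ((n + 1) * x) + c + d)) := by
  have hshift : HasSum (fun k : ℕ => (if k = 0 then 0 else bask (n + 1) (k - 1) x) * (c * k + d))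
      (c * ((n + 1) * x) + c + d) := by
    rw [← hasSum_nat_add_iff' 1]
    simpa [add_assoc, mul_add] using hasSum_bask_mul_affine n hx c (c + d)
  convert ((hasSum_bask_mul_affine n hx c d).mul_left (a0 n + a1 n * x)).add
    (hshift.mul_left (a0 n - a1 n * (1 + x))) using 2 with k
  · rfl
  · unfold p1
    ring

end Sums

lemma V1_central_moment_one_eq (a0 a1 : ℕ → ℝ) (n : ℕ) {x : ℝ} (hx : 0 ≤ x) :
    V1 a0 a1 (n + 3) (fun t => t - x) x
      = (1 + 2 * x) * (3 * a0 (n + 3) - 2 * a1 (n + 3)) / (n + 1) := by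
  have hint (k : ℕ) : ∫ t in Ioi (0 : ℝ), bask (n + 3) k t * (t - x)
      = 1 / ((n + 1) * (n + 2)) * k + (1 / ((n + 1) * (n + 2)) - x / (n + 2)) := by
    rw [integral_bask_mul_sub]
    ring
  rw [V1, tsum_congr fun k => by rw [hint], (hasSum_p1_mul_affine a0 a1 _ hx _ _).tsum_eq]
  push_cast
  field_simp
  ring

theorem V1_limit_central_moment_one (a0 a1 : ℕ → ℝ) (l m : ℝ)
    (ha0 : Tendsto a0 atTop (𝓝 l)) (ha1 : Tendsto a1 atTop (𝓝 m))
    (x : ℝ) (hx : 0 ≤ x) :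
    Tendsto (fun n : ℕ => (n : ℝ) * V1 a0 a1 n (fun t => t - x) x) atTop
      (𝓝 ((1 + 2 * x) * (3 * l - 2 * m))) := by
  have hclosed : ∀ᶠ n : ℕ in atTop, (n : ℝ) / (n + -2) * ((1 + 2 * x) * (3 * a0 n - 2 * a1 n))
      = n * V1 a0 a1 n (fun t => t - x) x := by
    filter_upwards [eventually_ge_atTop 3] with n hn
    obtain ⟨n, rfl⟩ := Nat.exists_eq_add_of_le' hn
    rw [V1_central_moment_one_eq a0 a1 n hx]
    push_cast
    ring
  have hlim := (tendsto_natCast_div_add_atTop (-2 : ℝ)).mul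
    (((ha0.const_mul 3).sub (ha1.const_mul 2)).const_mul (1 + 2 * x))
  rw [one_mul] at hlim
  exact hlim.congr' hclosed
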